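/- arXiv:1811.00792 — 6 statements merged into one kernel-verified Lean document; each statement's English description precedes it below -/
import Mathlib

section
/- Let E be a normed space, A ⊆ E a bounded set, and T : E → E a nonexpansive map with T A = A. Then T maps the Chebyshev center set C(A) into itself, i.e., if c ∈ C(A) then T c ∈ C(A). -/
open Metric

/-- The Chebyshev radius of a set `A`. -/
noncomputable def chebRadius {E : Type*} [NormedAddCommGroup E] [NormedSpace ℝ E]
    (A : Set E) : ℝ :=
  sInf {r : ℝ | 0 ≤ r ∧ ∃ x : E, A ⊆ closedBall x r}

/-- The Chebyshev center set of `A`. -/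
def chebCenter {E : Type*} [NormedAddCommGroup E] [NormedSpace ℝ E] (A : Set E) : Set E :=
  {c : E | A ⊆ closedBall c (chebRadius A)}

theorem LipschitzWith.mapsTo_setOf_subset_closedBall {α : Type*} [PseudoMetricSpace α]
    {T : α → α} (hT : LipschitzWith 1 T) {A : Set α} (hA : A ⊆ T '' A) (r : ℝ) :
    Set.MapsTo T {c | A ⊆ closedBall c r} {c | A ⊆ closedBall c r} := by
  intro c hc a ha
  obtain ⟨a', ha', rfl⟩ := hA ha
  calc dist (T a') (T c) ≤ dist a' c := hT.dist_le_mul a' c |>.trans_eq (one_mul _)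
    _ ≤ r := hc ha'

theorem nonexpansive_mapsTo_chebCenter_general
    {E : Type*} [NormedAddCommGroup E] [NormedSpace ℝ E]
    (A : Set E)
    (T : E → E) (hT : ∀ x y : E, ‖T x - T y‖ ≤ ‖x - y‖)
    (hTA : T '' A = A) :
    ∀ c ∈ chebCenter A, T c ∈ chebCenter A := by
  have hT' : LipschitzWith 1 T := .of_dist_le_mul fun x y => by
    simpa only [dist_eq_norm, NNReal.coe_one, one_mul] using hT x y
  exact hT'.mapsTo_setOf_subset_closedBall hTA.symm.subset (chebRadius A)

/-- If `A` is bounded and the nonexpansive map `T` satisfies `T A = A`, then `T` maps the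
Chebyshev center set of `A` into itself. -/
theorem nonexpansive_mapsTo_chebCenter
    {E : Type*} [NormedAddCommGroup E] [NormedSpace ℝ E]
    (A : Set E) (hA : Bornology.IsBounded A)
    (T : E → E) (hT : ∀ x y : E, ‖T x - T y‖ ≤ ‖x - y‖)
    (hTA : T '' A = A) :
    ∀ c ∈ chebCenter A, T c ∈ chebCenter A :=
  nonexpansive_mapsTo_chebCenter_general A T hT hTA
end

section
/- Every nonexpansive surjection of a compact metric space onto itself is an isometry. -/
/-!
A right inverse `S` of `T` satisfies `d(x, y) ≤ d(S x, S y)`. By compactness the orbit of any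
point under such a non-contracting map returns arbitrarily close to the point, and applying this
to `S × S` on `X × X` shows that `S` is an isometry onto a dense, hence closed, hence full range.
So `S` is an isometric bijection and `T` is its inverse.
-/

open Function Set

theorem CompactSpace.exists_lt_dist_lt {X : Type*} [PseudoMetricSpace X] [CompactSpace X]
    (u : ℕ → X) {ε : ℝ} (hε : 0 < ε) : ∃ k l, k < l ∧ dist (u l) (u k) < ε := by
  obtain ⟨a, -, φ, hφ, hlim⟩ := isCompact_univ.tendsto_subseq fun n => mem_univ (u n)
  obtain ⟨N, hN⟩ := Metric.cauchySeq_iff'.1 hlim.cauchySeq ε hε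
  exact ⟨φ N, φ (N + 1), hφ N.lt_succ_self, hN (N + 1) N.le_succ⟩

namespace AntilipschitzWith

section EMetric

variable {α β γ δ : Type*} [PseudoEMetricSpace α] [PseudoEMetricSpace β] [PseudoEMetricSpace γ]
  [PseudoEMetricSpace δ] {K : NNReal}

theorem iterate {f : α → α} (hf : AntilipschitzWith K f) :
    ∀ n, AntilipschitzWith (K ^ n) f^[n]
  | 0 => by simpa using AntilipschitzWith.id
  | n + 1 => by simpa only [iterate_succ, pow_succ'] using (hf.iterate n).comp hf

theorem prodMap {f : α → β} {g : γ → δ} (hf : AntilipschitzWith K f)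
    (hg : AntilipschitzWith K g) : AntilipschitzWith K (Prod.map f g) := fun p q => by
  simp only [Prod.edist_eq, Prod.map_fst, Prod.map_snd, ← max_mul_mul_left]
  exact max_le_max (hf p.1 q.1) (hg p.2 q.2)

end EMetric

variable {X : Type*} {f : X → X}

theorem exists_dist_iterate_lt [PseudoMetricSpace X] [CompactSpace X]
    (hf : AntilipschitzWith 1 f) (x : X) {ε : ℝ} (hε : 0 < ε) :
    ∃ n, dist (f^[n + 1] x) x < ε := by
  obtain ⟨k, l, hkl, hlk⟩ := CompactSpace.exists_lt_dist_lt (fun n => f^[n] x) hε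
  obtain ⟨n, rfl⟩ := Nat.exists_eq_add_of_lt hkl
  refine ⟨n, ?_⟩
  calc dist (f^[n + 1] x) x ≤ dist (f^[k] (f^[n + 1] x)) (f^[k] x) := by
        simpa using (hf.iterate k).le_mul_dist (f^[n + 1] x) x
    _ = dist (f^[k + n + 1] x) (f^[k] x) := by rw [← iterate_add_apply, add_assoc]
    _ < ε := hlk

theorem isometry_of_compactSpace [PseudoMetricSpace X] [CompactSpace X]
    (hf : AntilipschitzWith 1 f) : Isometry f := by
  refine Isometry.of_dist_eq fun x y => le_antisymm ?_ (by simpa using hf.le_mul_dist x y)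
  refine le_of_forall_pos_lt_add fun ε hε => ?_
  obtain ⟨n, hclose⟩ := (hf.prodMap hf).exists_dist_iterate_lt (x, y) (half_pos hε)
  simp only [Prod.map_iterate, Prod.map_apply, Prod.dist_eq, max_lt_iff] at hclose
  obtain ⟨hx, hy⟩ := hclose
  calc dist (f x) (f y) ≤ dist (f^[n] (f x)) (f^[n] (f y)) := by
        simpa using (hf.iterate n).le_mul_dist (f x) (f y)
    _ ≤ dist (f^[n + 1] x) x + dist x y + dist y (f^[n + 1] y) := dist_triangle4 _ _ _ _
    _ < dist x y + ε := by rw [dist_comm y]; linarith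

theorem surjective_of_compactSpace [MetricSpace X] [CompactSpace X]
    (hf : AntilipschitzWith 1 f) : Surjective f := by
  have hclosed : IsClosed (range f) :=
    (isCompact_range hf.isometry_of_compactSpace.continuous).isClosed
  intro x
  rw [← mem_range, ← hclosed.closure_eq, Metric.mem_closure_iff]
  intro ε hε
  obtain ⟨n, hn⟩ := hf.exists_dist_iterate_lt x hε
  exact ⟨f^[n + 1] x, ⟨f^[n] x, (iterate_succ_apply' f n x).symm⟩, by rwa [dist_comm]⟩

end AntilipschitzWith

/-- Freudenthal–Hurewicz: a nonexpansive surjection of a compact metric space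
onto itself is an isometry. -/
theorem nonexpansive_surjective_isometry
    {X : Type*} [MetricSpace X] [CompactSpace X]
    (T : X → X) (hsurj : Function.Surjective T)
    (hT : ∀ x y : X, dist (T x) (T y) ≤ dist x y) :
    ∀ x y : X, dist (T x) (T y) = dist x y := by
  have hTS : RightInverse (surjInv hsurj) T := rightInverse_surjInv hsurj
  have hS : AntilipschitzWith 1 (surjInv hsurj) := (LipschitzWith.mk_one hT).to_rightInverse hTS
  intro x y
  obtain ⟨a, rfl⟩ := hS.surjective_of_compactSpace x
  obtain ⟨b, rfl⟩ := hS.surjective_of_compactSpace y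
  rw [hTS a, hTS b, hS.isometry_of_compactSpace.dist_eq]
end

section
/- Let S be a family of self-maps of a set C, R : C → C a retraction onto Fix S (i.e., R C = Fix S and R x = x for x ∈ Fix S), and T : C → C a map commuting with every member of S. Then Fix T ∩ Fix S = Fix (T ∘ R). -/
open Function Set

section

variable {C : Type*}

theorem mapsTo_commonFixedPoints_of_commute {S : Set (C → C)} {T : C → C}
    (hcomm : ∀ U ∈ S, Function.Commute T U) :
    MapsTo T {x | ∀ U ∈ S, U x = x} {x | ∀ U ∈ S, U x = x} :=
  fun _ hx U hU => IsFixedPt.map (hx U hU) (hcomm U hU)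

theorem fixedPoints_comp_of_retraction {F : Set C} {R T : C → C} (hR : range R ⊆ F)
    (hRF : ∀ x ∈ F, R x = x) (hT : MapsTo T F F) :
    fixedPoints (T ∘ R) = fixedPoints T ∩ F := by
  ext x
  constructor
  · intro hx
    have hxF : x ∈ F := hx ▸ hT (hR (mem_range_self x))
    refine ⟨?_, hxF⟩
    simpa only [mem_fixedPoints, IsFixedPt, comp_apply, hRF x hxF] using hx
  · rintro ⟨hTx, hxF⟩
    simpa only [mem_fixedPoints, IsFixedPt, comp_apply, hRF x hxF] using hTx

end

/-- If `R` is a retraction of `C` onto the common fixed point set of a family `S`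
and `T` commutes with every member of `S`, then `Fix T ∩ Fix S = Fix (T ∘ R)`. -/
theorem fix_inter_fix_eq_fix_comp
    {C : Type*} (S : Set (C → C)) (R T : C → C)
    (hrange : Set.range R = {x : C | ∀ U ∈ S, U x = x})
    (hretr : ∀ x ∈ {x : C | ∀ U ∈ S, U x = x}, R x = x)
    (hcomm : ∀ U ∈ S, T ∘ U = U ∘ T) :
    {x : C | T x = x} ∩ {x : C | ∀ U ∈ S, U x = x} = {x : C | T (R x) = x} :=
  (fixedPoints_comp_of_retraction hrange.subset hretr
    (mapsTo_commonFixedPoints_of_commute fun U hU => semiconj_iff_comp_eq.mpr (hcomm U hU))).symm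
end

section
/- Let C be a subset of a normed space, S a commuting family of nonexpansive self-maps of C, R : C → C a nonexpansive retraction onto Fix S, and T : C → C a nonexpansive map commuting with every member of S. If (xₙ) ⊆ C satisfies ‖T R xₙ − xₙ‖ → 0, then ‖S' xₙ − xₙ‖ → 0 for every S' ∈ S, ‖R xₙ − xₙ‖ → 0, and ‖T xₙ − xₙ‖ → 0. -/
open Filter Topology

/-!
Every `R (x n)` lies in `Fix S`, hence so does `T (R (x n))` since `T` commutes with `S`, and
then `R` fixes it too. So `y n := T (R (x n))` is a common fixed point of `S` and `R` with
`‖y n - x n‖ → 0`, and a nonexpansive `f` fixing `y n` moves `x n` by at most `2 ‖y n - x n‖`.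
For `T` itself compare with `R (x n)` instead: `‖T (x n) - x n‖ ≤ ‖x n - R (x n)‖ + ‖y n - x n‖`.
-/

theorem tendsto_norm_apply_sub_of_tendsto_norm_sub {E ι : Type*} [SeminormedAddCommGroup E]
    {l : Filter ι} {f : E → E} {x y : ι → E}
    (hf : ∀ n, ‖f (x n) - f (y n)‖ ≤ ‖x n - y n‖)
    (hxy : Tendsto (fun n => ‖x n - y n‖) l (𝓝 0))
    (hfy : Tendsto (fun n => ‖f (y n) - x n‖) l (𝓝 0)) :
    Tendsto (fun n => ‖f (x n) - x n‖) l (𝓝 0) := by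
  refine squeeze_zero (fun n => norm_nonneg _) (fun n => ?_) (by simpa using hxy.add hfy)
  calc ‖f (x n) - x n‖ ≤ ‖f (x n) - f (y n)‖ + ‖f (y n) - x n‖ :=
        norm_sub_le_norm_sub_add_norm_sub _ _ _
    _ ≤ ‖x n - y n‖ + ‖f (y n) - x n‖ := by gcongr; exact hf n

theorem approx_fixed_point_of_TR_general
    {E : Type*} [NormedAddCommGroup E] (C : Set E)
    (S : Set (E → E)) (R T : E → E)
    (hSnonexp : ∀ U ∈ S, ∀ x ∈ C, ∀ y ∈ C, ‖U x - U y‖ ≤ ‖x - y‖)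
    (hRmaps : Set.MapsTo R C C)
    (hRnonexp : ∀ x ∈ C, ∀ y ∈ C, ‖R x - R y‖ ≤ ‖x - y‖)
    (hRrange : R '' C = {x ∈ C | ∀ U ∈ S, U x = x})
    (hRretr : ∀ x ∈ C, (∀ U ∈ S, U x = x) → R x = x)
    (hTmaps : Set.MapsTo T C C)
    (hTnonexp : ∀ x ∈ C, ∀ y ∈ C, ‖T x - T y‖ ≤ ‖x - y‖)
    (hTcomm : ∀ U ∈ S, ∀ x ∈ C, T (U x) = U (T x))
    (x : ℕ → E) (hxC : ∀ n, x n ∈ C)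
    (hafps : Tendsto (fun n => ‖T (R (x n)) - x n‖) atTop (nhds 0)) :
    (∀ U ∈ S, Tendsto (fun n => ‖U (x n) - x n‖) atTop (nhds 0)) ∧
      Tendsto (fun n => ‖R (x n) - x n‖) atTop (nhds 0) ∧
      Tendsto (fun n => ‖T (x n) - x n‖) atTop (nhds 0) := by
  have hRC n : R (x n) ∈ C := hRmaps (hxC n)
  have hRfix n : ∀ U ∈ S, U (R (x n)) = R (x n) :=
    (hRrange ▸ Set.mem_image_of_mem R (hxC n) : R (x n) ∈ {x ∈ C | ∀ U ∈ S, U x = x}).2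
  have hTRfix n U (hU : U ∈ S) : U (T (R (x n))) = T (R (x n)) := by
    rw [← hTcomm U hU _ (hRC n), hRfix n U hU]
  have hRTR n : R (T (R (x n))) = T (R (x n)) := hRretr _ (hTmaps (hRC n)) (hTRfix n)
  have hafps' : Tendsto (fun n => ‖x n - T (R (x n))‖) atTop (𝓝 0) := by
    simpa only [norm_sub_rev] using hafps
  have hR : Tendsto (fun n => ‖R (x n) - x n‖) atTop (𝓝 0) :=
    tendsto_norm_apply_sub_of_tendsto_norm_sub
      (fun n => hRnonexp _ (hxC n) _ (hTmaps (hRC n))) hafps' (by simpa only [hRTR] using hafps)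
  refine ⟨fun U hU => ?_, hR, ?_⟩
  · exact tendsto_norm_apply_sub_of_tendsto_norm_sub
      (fun n => hSnonexp U hU _ (hxC n) _ (hTmaps (hRC n))) hafps'
      (by simpa only [hTRfix _ U hU] using hafps)
  · exact tendsto_norm_apply_sub_of_tendsto_norm_sub (fun n => hTnonexp _ (hxC n) _ (hRC n))
      (by simpa only [norm_sub_rev] using hR) hafps

/-- Lemma: let `S` be a commuting family of nonexpansive self-maps of `C`, `R` a
nonexpansive retraction of `C` onto `Fix S`, and `T` a nonexpansive self-map of `C`
commuting with every member of `S`.  Every approximate fixed point sequence of `T ∘ R`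
is an approximate fixed point sequence of every member of `S`, of `R`, and of `T`. -/
theorem approx_fixed_point_of_TR
    {E : Type*} [NormedAddCommGroup E] [NormedSpace ℝ E] (C : Set E)
    (S : Set (E → E)) (R T : E → E)
    (hSmaps : ∀ U ∈ S, Set.MapsTo U C C)
    (hSnonexp : ∀ U ∈ S, ∀ x ∈ C, ∀ y ∈ C, ‖U x - U y‖ ≤ ‖x - y‖)
    (hScomm : ∀ U ∈ S, ∀ V ∈ S, ∀ x ∈ C, U (V x) = V (U x))
    (hRmaps : Set.MapsTo R C C)
    (hRnonexp : ∀ x ∈ C, ∀ y ∈ C, ‖R x - R y‖ ≤ ‖x - y‖)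
    (hRrange : R '' C = {x ∈ C | ∀ U ∈ S, U x = x})
    (hRretr : ∀ x ∈ C, (∀ U ∈ S, U x = x) → R x = x)
    (hTmaps : Set.MapsTo T C C)
    (hTnonexp : ∀ x ∈ C, ∀ y ∈ C, ‖T x - T y‖ ≤ ‖x - y‖)
    (hTcomm : ∀ U ∈ S, ∀ x ∈ C, T (U x) = U (T x))
    (x : ℕ → E) (hxC : ∀ n, x n ∈ C)
    (hafps : Tendsto (fun n => ‖T (R (x n)) - x n‖) atTop (nhds 0)) :
    (∀ U ∈ S, Tendsto (fun n => ‖U (x n) - x n‖) atTop (nhds 0)) ∧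
      Tendsto (fun n => ‖R (x n) - x n‖) atTop (nhds 0) ∧
      Tendsto (fun n => ‖T (x n) - x n‖) atTop (nhds 0) :=
  approx_fixed_point_of_TR_general C S R T hSnonexp hRmaps hRnonexp hRrange hRretr hTmaps hTnonexp
    hTcomm x hxC hafps
end

section
/- Let C be a τ-compact subset of a normed space E whose norm is τ-lower semicontinuous, and let S be a family of τ-continuous self-maps of C such that for every finite subfamily A ⊆ S, Fix A is a nonexpansive retract of C. Then Fix S is a nonexpansive retract of C (in particular nonempty). -/
/-!
Choose, for every finite subfamily `A ⊆ S`, a nonexpansive retraction `r_A` of `C` onto `Fix A`,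
and let `f` be the pointwise limit of `r_A` along an ultrafilter refining the directed order of
finite subfamilies; it exists by `τ`-compactness of `C`. Eventually `A` contains any given
`T ∈ S`, so `T (r_A x) = r_A x` eventually and `τ`-continuity of `T` gives `T (f x) = f x`.
Each `r_A` is the identity on `Fix S`, hence so is `f`, and the bound `‖r_A x - r_A y‖ ≤ ‖x - y‖`
survives the limit because the norm is `τ`-lower semicontinuous.
-/

/-- `D` is a (nonvoid) nonexpansive retract of `C`: there is a map `R` of `C` onto `D`,
nonexpansive on `C`, restricting to the identity on `D`. -/
def IsNonexpansiveRetract {E : Type*} [NormedAddCommGroup E] [NormedSpace ℝ E]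
    (D C : Set E) : Prop :=
  D.Nonempty ∧ D ⊆ C ∧
    ∃ R : E → E, R '' C = D ∧ (∀ x ∈ D, R x = x) ∧
      ∀ x ∈ C, ∀ y ∈ C, ‖R x - R y‖ ≤ ‖x - y‖

open Filter Set Topology

theorem isNonexpansiveRetract_of_mapsTo {E : Type*} [NormedAddCommGroup E] [NormedSpace ℝ E]
    {D C : Set E} (hDC : D ⊆ C) (hC : C.Nonempty) {R : E → E} (hRD : MapsTo R C D)
    (hR : ∀ x ∈ D, R x = x) (hRne : ∀ x ∈ C, ∀ y ∈ C, ‖R x - R y‖ ≤ ‖x - y‖) :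
    IsNonexpansiveRetract D C := by
  refine ⟨(hC.image R).mono hRD.image_subset, hDC, R, ?_, hR, hRne⟩
  exact hRD.image_subset.antisymm fun x hx => ⟨x, hDC hx, hR x hx⟩

theorem IsCompact.exists_mapsTo_forall_tendsto {X ι : Type*} [TopologicalSpace X] {C : Set X}
    (hC : IsCompact C) (l : Ultrafilter ι) {r : ι → X → X} (hr : ∀ i, MapsTo (r i) C C) :
    ∃ f : X → X, MapsTo f C C ∧ ∀ x ∈ C, Tendsto (fun i => r i x) l (𝓝 (f x)) := by
  have hlim : ∀ x ∈ C, ∃ a ∈ C, Tendsto (fun i => r i x) l (𝓝 a) := fun x hx =>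
    hC.ultrafilter_le_nhds (l.map fun i => r i x)
      (tendsto_principal.2 (Eventually.of_forall fun i => hr i hx))
  choose! f hfC hf using hlim
  exact ⟨f, hfC, hf⟩

theorem ContinuousWithinAt.apply_eq_self_of_tendsto {X ι : Type*} [TopologicalSpace X]
    [T2Space X] {T : X → X} {s : Set X} {a : X} (hT : ContinuousWithinAt T s a)
    {l : Filter ι} [l.NeBot] {u : ι → X} (hu : Tendsto u l (𝓝 a)) (hus : ∀ᶠ i in l, u i ∈ s)
    (hfix : ∀ᶠ i in l, T (u i) = u i) : T a = a :=
  tendsto_nhds_unique (hT.tendsto.comp (tendsto_nhdsWithin_iff.2 ⟨hu, hus⟩))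
    (hu.congr' (hfix.mono fun _ h => h.symm))

theorem fix_family_nonexpansive_retract_of_finite_general
    {E : Type*} [NormedAddCommGroup E] [NormedSpace ℝ E]
    (t : TopologicalSpace E) (ht2 : @T2Space E t)
    (htgrp : @IsTopologicalAddGroup E t _)
    (hlsc : @LowerSemicontinuous E ℝ t _ (fun x => ‖x‖))
    (C : Set E) (hC : @IsCompact E t C)
    (S : Set (E → E))
    (hcont : ∀ T ∈ S, @ContinuousOn E E t t T C)
    (hfin : ∀ A ⊆ S, A.Finite →
      IsNonexpansiveRetract {x ∈ C | ∀ T ∈ A, T x = x} C) :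
    IsNonexpansiveRetract {x ∈ C | ∀ T ∈ S, T x = x} C := by
  let _ : TopologicalSpace E := t
  obtain ⟨⟨x₀, hx₀, -⟩, -⟩ := hfin ∅ (empty_subset S) finite_empty
  -- Indexing by all finsets, with `r A` retracting onto `Fix (A ∩ S)`, makes the directed set
  -- simply `Finset (E → E)`.
  choose r hr_img hr_id hr_ne using fun A : Finset (E → E) =>
    (hfin (↑A ∩ S) inter_subset_right (A.finite_toSet.inter_of_left S)).2.2
  have hr_maps : ∀ A, MapsTo (r A) C {x ∈ C | ∀ T ∈ ↑A ∩ S, T x = x} := fun A =>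
    mapsTo_iff_image_subset.2 (hr_img A).subset
  let l : Ultrafilter (Finset (E → E)) := .of atTop
  obtain ⟨f, hfC, hf⟩ := hC.exists_mapsTo_forall_tendsto l fun A x hx => (hr_maps A hx).1
  refine isNonexpansiveRetract_of_mapsTo (fun x hx => hx.1) ⟨x₀, hx₀⟩
    (fun x hx => ⟨hfC hx, fun T hT => ?_⟩) (fun x hx => ?_) (fun x hx y hy => ?_)
  · have hTA : ∀ᶠ A in (l : Filter (Finset (E → E))), T ∈ A := Ultrafilter.of_le atTop
      ((eventually_ge_atTop {T}).mono fun _ hA => Finset.singleton_subset_iff.1 hA)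
    exact (hcont T hT (f x) (hfC hx)).apply_eq_self_of_tendsto (hf x hx)
      (Eventually.of_forall fun A => (hr_maps A hx).1)
      (hTA.mono fun A hA => (hr_maps A hx).2 T ⟨hA, hT⟩)
  · exact tendsto_nhds_unique (hf x hx.1)
      (tendsto_const_nhds.congr fun A => (hr_id A x ⟨hx.1, fun T hT => hx.2 T hT.2⟩).symm)
  · exact (hlsc.isClosed_preimage ‖x - y‖).mem_of_tendsto ((hf x hx).sub (hf y hy))
      (Eventually.of_forall fun A => hr_ne A x hx y hy)

/-- If `C` is `τ`-compact, the norm is `τ`-lower semicontinuous, and the common fixed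
point set of every finite subfamily of the `τ`-continuous family `S` is a nonexpansive
retract of `C`, then `Fix S` is a nonexpansive retract of `C` (in particular nonempty). -/
theorem fix_family_nonexpansive_retract_of_finite
    {E : Type*} [NormedAddCommGroup E] [NormedSpace ℝ E]
    (t : TopologicalSpace E) (ht2 : @T2Space E t)
    (htgrp : @IsTopologicalAddGroup E t _)
    (hlsc : @LowerSemicontinuous E ℝ t _ (fun x => ‖x‖))
    (C : Set E) (hC : @IsCompact E t C)
    (S : Set (E → E))
    (hmaps : ∀ T ∈ S, Set.MapsTo T C C)
    (hcont : ∀ T ∈ S, @ContinuousOn E E t t T C)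
    (hfin : ∀ A ⊆ S, A.Finite →
      IsNonexpansiveRetract {x ∈ C | ∀ T ∈ A, T x = x} C) :
    IsNonexpansiveRetract {x ∈ C | ∀ T ∈ S, T x = x} C :=
  fix_family_nonexpansive_retract_of_finite_general t ht2 htgrp hlsc C hC S hcont hfin
end

section
/- Let C be a nonempty τ-compact convex bounded subset of a Banach space E whose norm is τ-lower semicontinuous, and let S be a finite commuting family of nonexpansive τ-continuous self-maps of C. Then Fix S is a nonempty nonexpansive retract of C. -/
set_option linter.unusedSectionVars false

open Filter Set Topology Bornology

section TopWorld

variable {X : Type*} [TopologicalSpace X] [T2Space X] [AddCommGroup X]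
  [IsTopologicalAddGroup X]

/-- lsc of `N` transfers bounds along convergent filters. -/
lemma lsc_le_of_tendsto' {N : X → ℝ} (hlsc : LowerSemicontinuous N)
    {ι : Type*} {l : Filter ι} [l.NeBot] {u : ι → X} {z : X}
    (hu : Tendsto u l (𝓝 z)) {a : ℝ} (h : ∀ᶠ i in l, N (u i) ≤ a) : N z ≤ a := by
  by_contra hc
  push_neg at hc
  have h2 : ∀ᶠ i in l, a < N (u i) := hu.eventually (hlsc z a hc)
  rcases (h2.and h).exists with ⟨i, h1, h2⟩
  linarith

lemma fixset_closed' (C : Set X) (hC : IsCompact C) (S : Set (X → X))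
    (hcont : ∀ T ∈ S, ContinuousOn T C) :
    IsClosed {x ∈ C | ∀ T ∈ S, T x = x} := by
  set A := {x ∈ C | ∀ T ∈ S, T x = x} with hA
  have hAC : A ⊆ C := fun x hx => hx.1
  rw [← closure_subset_iff_isClosed]
  intro x hx
  have hxC : x ∈ C := hC.isClosed.closure_subset_iff.mpr subset_rfl
    (closure_mono hAC hx)
  refine ⟨hxC, fun T hT => ?_⟩
  haveI : (𝓝[A] x).NeBot := mem_closure_iff_nhdsWithin_neBot.mp hx
  have h1 : Tendsto T (𝓝[A] x) (𝓝 (T x)) :=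
    ((hcont T hT) x hxC).mono_left (nhdsWithin_mono x hAC)
  have h2 : Tendsto (fun y : X => y) (𝓝[A] x) (𝓝 x) := nhdsWithin_le_nhds
  have h3 : T =ᶠ[𝓝[A] x] fun y => y := by
    filter_upwards [self_mem_nhdsWithin] with y hy
    exact hy.2 T hT
  exact tendsto_nhds_unique (h1.congr' h3) h2

lemma seq_mem_of_compact' {N : X → ℝ} (hlsc : LowerSemicontinuous N)
    (hN0 : ∀ z : X, N z ≤ 0 → z = 0)
    (C : Set X) (hC : IsCompact C) (u : ℕ → X) (x : X)
    (hu : ∀ n, u n ∈ C) (hx : Tendsto (fun n => N (u n - x)) atTop (𝓝 0)) :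
    x ∈ C := by
  set U : Ultrafilter ℕ := Ultrafilter.of atTop
  have hUle : (U : Filter ℕ) ≤ atTop := Ultrafilter.of_le atTop
  obtain ⟨y, hyC, hy⟩ := hC.ultrafilter_le_nhds (U.map u) (by
    rw [Ultrafilter.coe_map, le_principal_iff, mem_map]
    exact univ_mem' hu)
  have hten : Tendsto u (U : Filter ℕ) (𝓝 y) := by
    rwa [Ultrafilter.coe_map] at hy
  have hsub : Tendsto (fun n => u n - x) (U : Filter ℕ) (𝓝 (y - x)) :=
    hten.sub_const x
  have hle : N (y - x) ≤ 0 := by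
    refine le_of_forall_pos_le_add (fun a ha => ?_)
    rw [zero_add]
    refine lsc_le_of_tendsto' hlsc hsub ?_
    have hev : ∀ᶠ n in atTop, N (u n - x) < a := by
      have := hx.eventually (eventually_lt_nhds ha)
      simpa using this
    exact ((hev.mono (fun n h => le_of_lt h)).filter_mono hUle)
  rwa [sub_eq_zero.mp (hN0 _ hle)] at hyC

/-- The key limit construction:  a pointwise `τ`-cluster point of the approximating
sequence `g n` is a nonexpansive retraction-like map with image in `F ∩ Fix T`. -/
lemma exists_limit_map' {N : X → ℝ} (hlsc : LowerSemicontinuous N)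
    (hN0 : ∀ z : X, N z ≤ 0 → z = 0)
    (C F G : Set X) (hC : IsCompact C) (hFcl : IsClosed F) (hFC : F ⊆ C) (hGC : G ⊆ C)
    (T : X → X) (hTcont : ContinuousOn T C)
    (g : ℕ → X → X) (hgF : ∀ n, ∀ x ∈ C, g n x ∈ F)
    (hgne : ∀ n, ∀ x ∈ C, ∀ y ∈ C, N (g n x - g n y) ≤ N (x - y))
    (hgid : ∀ n, ∀ x ∈ G, g n x = x)
    (c : ℕ → ℝ) (hc : Tendsto c atTop (𝓝 0))
    (happrox : ∀ n, ∀ x ∈ C, N (g n x - T (g n x)) ≤ c n) :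
    ∃ s : X → X, (∀ x ∈ C, s x ∈ F ∧ T (s x) = s x) ∧ (∀ x ∈ G, s x = x) ∧
      (∀ x ∈ C, ∀ y ∈ C, N (s x - s y) ≤ N (x - y)) := by
  classical
  set U : Ultrafilter ℕ := Ultrafilter.of atTop
  have hUle : (U : Filter ℕ) ≤ atTop := Ultrafilter.of_le atTop
  have key : ∀ x, x ∈ C → ∃ p, p ∈ C ∧ Tendsto (fun n => g n x) (U : Filter ℕ) (𝓝 p) := by
    intro x hx
    obtain ⟨p, hpC, hp⟩ := hC.ultrafilter_le_nhds (U.map (fun n => g n x)) (by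
      rw [Ultrafilter.coe_map, le_principal_iff, mem_map]
      exact univ_mem' (fun n => hFC (hgF n x hx)))
    rw [Ultrafilter.coe_map] at hp
    exact ⟨p, hpC, hp⟩
  set s : X → X := fun x => if hx : x ∈ C then (key x hx).choose else x with hs
  have hsC : ∀ x (hx : x ∈ C), s x ∈ C := by
    intro x hx; rw [hs]; simp only [dif_pos hx]; exact (key x hx).choose_spec.1
  have hsten : ∀ x (hx : x ∈ C), Tendsto (fun n => g n x) (U : Filter ℕ) (𝓝 (s x)) := by
    intro x hx; rw [hs]; simp only [dif_pos hx]; exact (key x hx).choose_spec.2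
  have hsid : ∀ x ∈ G, s x = x := by
    intro x hx
    have h1 : Tendsto (fun n => g n x) (U : Filter ℕ) (𝓝 x) :=
      Tendsto.congr (fun n => (hgid n x hx).symm) tendsto_const_nhds
    exact tendsto_nhds_unique (hsten x (hGC hx)) h1
  refine ⟨s, fun x hx => ?_, hsid, fun x hx y hy => ?_⟩
  · have hmemF : s x ∈ F :=
      hFcl.mem_of_tendsto (hsten x hx) (Eventually.of_forall (fun n => hgF n x hx))
    refine ⟨hmemF, ?_⟩
    have hsxC : s x ∈ C := hsC x hx
    have h1 : Tendsto (fun n => g n x) (U : Filter ℕ) (𝓝[C] (s x)) := by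
      rw [tendsto_nhdsWithin_iff]
      exact ⟨hsten x hx, Eventually.of_forall (fun n => hFC (hgF n x hx))⟩
    have h2 : Tendsto (fun n => T (g n x)) (U : Filter ℕ) (𝓝 (T (s x))) :=
      (hTcont (s x) hsxC).tendsto.comp h1
    have h3 : Tendsto (fun n => g n x - T (g n x)) (U : Filter ℕ)
        (𝓝 (s x - T (s x))) := (hsten x hx).sub h2
    have hle : N (s x - T (s x)) ≤ 0 := by
      refine le_of_forall_pos_le_add (fun a ha => ?_)
      rw [zero_add]
      refine lsc_le_of_tendsto' hlsc h3 ?_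
      have hev : ∀ᶠ n in atTop, c n < a := by
        have := hc.eventually (eventually_lt_nhds ha)
        simpa using this
      refine (hev.filter_mono hUle).mono (fun n hn => ?_)
      exact le_of_lt (lt_of_le_of_lt (happrox n x hx) hn)
    have := hN0 _ hle
    rw [sub_eq_zero] at this
    exact this.symm
  · have h3 : Tendsto (fun n => g n x - g n y) (U : Filter ℕ)
        (𝓝 (s x - s y)) := (hsten x hx).sub (hsten y hy)
    exact lsc_le_of_tendsto' hlsc h3 (Eventually.of_forall (fun n => hgne n x hx y hy))

end TopWorld
lemma exists_approx_seq {E : Type*} [NormedAddCommGroup E] [NormedSpace ℝ E]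
    [CompleteSpace E]
    (C : Set E) (hne : C.Nonempty) (hCcl : IsClosed C) (hconv : Convex ℝ C)
    (hbdd : IsBounded C)
    (F : Set E) (hFC : F ⊆ C)
    (R : E → E) (hRF : ∀ x ∈ C, R x ∈ F) (hRid : ∀ x ∈ F, R x = x)
    (hRne : ∀ x ∈ C, ∀ y ∈ C, ‖R x - R y‖ ≤ ‖x - y‖)
    (T : E → E) (hTC : ∀ x ∈ C, T x ∈ C) (hTF : ∀ x ∈ F, T x ∈ F)
    (hTne : ∀ x ∈ C, ∀ y ∈ C, ‖T x - T y‖ ≤ ‖x - y‖) :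
    ∃ g : ℕ → E → E, ∃ c : ℕ → ℝ, Tendsto c atTop (𝓝 0) ∧
      (∀ n, ∀ x ∈ C, g n x ∈ F) ∧
      (∀ n, ∀ x ∈ C, ∀ y ∈ C, ‖g n x - g n y‖ ≤ ‖x - y‖) ∧
      (∀ n, ∀ x, x ∈ F → T x = x → g n x = x) ∧
      (∀ n, ∀ x ∈ C, ‖g n x - T (g n x)‖ ≤ c n) := by
  classical
  haveI : CompleteSpace C := hCcl.completeSpace_coe
  haveI : Nonempty C := hne.to_subtype
  set ε : ℕ → ℝ := fun n => 1 / (n + 1) with hε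
  have hεpos : ∀ n, 0 < ε n := fun n => by positivity
  have hεle : ∀ n, ε n ≤ 1 := by
    intro n
    rw [hε]
    rw [div_le_one (by positivity)]
    simp
  -- the contraction
  have hmem : ∀ (n : ℕ) (x : E), x ∈ C → ∀ y : C, R (ε n • x + (1 - ε n) • T ↑y) ∈ C := by
    intro n x hx y
    have h1 : ε n • x + (1 - ε n) • T ↑y ∈ C :=
      hconv hx (hTC _ y.2) (le_of_lt (hεpos n)) (by linarith [hεle n]) (by ring)
    exact hFC (hRF _ h1)
  have hcomb : ∀ (n : ℕ) (x : E), x ∈ C → ∀ y : C, ε n • x + (1 - ε n) • T ↑y ∈ C := by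
    intro n x hx y
    exact hconv hx (hTC _ y.2) (le_of_lt (hεpos n)) (by linarith [hεle n]) (by ring)
  set Φ : ∀ (n : ℕ) (x : E), x ∈ C → (C → C) :=
    fun n x hx y => ⟨R (ε n • x + (1 - ε n) • T ↑y), hmem n x hx y⟩ with hΦ
  have hK : ∀ n, (⟨1 - ε n, by linarith [hεle n]⟩ : NNReal) < 1 := by
    intro n
    apply NNReal.coe_lt_coe.mp
    show 1 - ε n < (1 : ℝ)
    linarith [hεpos n]
  have hcontr : ∀ (n : ℕ) (x : E) (hx : x ∈ C),
      ContractingWith ⟨1 - ε n, by linarith [hεle n]⟩ (Φ n x hx) := by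
    intro n x hx
    refine ⟨hK n, LipschitzWith.of_dist_le_mul (fun y z => ?_)⟩
    have h1 : dist (Φ n x hx y) (Φ n x hx z)
        = ‖R (ε n • x + (1 - ε n) • T ↑y) - R (ε n • x + (1 - ε n) • T ↑z)‖ := by
      rw [hΦ, Subtype.dist_eq, dist_eq_norm]
    rw [h1]
    have h2 : ‖R (ε n • x + (1 - ε n) • T ↑y) - R (ε n • x + (1 - ε n) • T ↑z)‖
        ≤ ‖(ε n • x + (1 - ε n) • T ↑y) - (ε n • x + (1 - ε n) • T ↑z)‖ :=
      hRne _ (hcomb n x hx y) _ (hcomb n x hx z)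
    have h3 : (ε n • x + (1 - ε n) • T ↑y) - (ε n • x + (1 - ε n) • T ↑z)
        = (1 - ε n) • (T ↑y - T ↑z) := by
      rw [smul_sub]; abel
    have h4 : ‖(1 - ε n) • (T (y:E) - T (z:E))‖ = (1 - ε n) * ‖T (y:E) - T (z:E)‖ := by
      rw [norm_smul, Real.norm_of_nonneg (by linarith [hεle n])]
    have h5 : ‖T (y:E) - T (z:E)‖ ≤ ‖(y:E) - (z:E)‖ := hTne _ y.2 _ z.2
    have h6 : dist y z = ‖(y:E) - (z:E)‖ := by rw [Subtype.dist_eq, dist_eq_norm]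
    calc ‖R (ε n • x + (1 - ε n) • T ↑y) - R (ε n • x + (1 - ε n) • T ↑z)‖
        ≤ ‖(ε n • x + (1 - ε n) • T ↑y) - (ε n • x + (1 - ε n) • T ↑z)‖ := h2
      _ = (1 - ε n) * ‖T (y:E) - T (z:E)‖ := by rw [h3, h4]
      _ ≤ (1 - ε n) * ‖(y:E) - (z:E)‖ := by
          apply mul_le_mul_of_nonneg_left h5 (by linarith [hεle n])
      _ = (⟨1 - ε n, by linarith [hεle n]⟩ : NNReal) * dist y z := by
          rw [h6]
  set g : ℕ → E → E := fun n x =>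
    if hx : x ∈ C then ((ContractingWith.fixedPoint (Φ n x hx) (hcontr n x hx) : C) : E) else x with hg
  have hfix : ∀ (n : ℕ) (x : E) (hx : x ∈ C),
      g n x = R (ε n • x + (1 - ε n) • T (g n x)) ∧ g n x ∈ C := by
    intro n x hx
    have h1 := (hcontr n x hx).fixedPoint_isFixedPt
    rw [Function.IsFixedPt] at h1
    have h2 : g n x = ((ContractingWith.fixedPoint (Φ n x hx) (hcontr n x hx) : C) : E) := by
      rw [hg]; simp only [dif_pos hx]
    constructor
    · rw [h2]
      conv_lhs => rw [← h1]
    · rw [h2]; exact (ContractingWith.fixedPoint (Φ n x hx) (hcontr n x hx)).2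
  have hgF : ∀ n, ∀ x ∈ C, g n x ∈ F := by
    intro n x hx
    rw [(hfix n x hx).1]
    exact hRF _ (hcomb n x hx ⟨_, (hfix n x hx).2⟩)
  set d : ℝ := Metric.diam C with hdd
  have hd : ∀ a ∈ C, ∀ b ∈ C, ‖a - b‖ ≤ d := by
    intro a ha b hb
    rw [← dist_eq_norm]
    exact Metric.dist_le_diam_of_mem hbdd ha hb
  refine ⟨g, fun n => ε n * d, ?_, hgF, ?_, ?_, ?_⟩
  · have h1 : Tendsto (fun n : ℕ => 1 / ((n : ℝ) + 1)) atTop (𝓝 0) :=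
      tendsto_one_div_add_atTop_nhds_zero_nat
    have h2 := h1.mul_const d
    rw [zero_mul] at h2
    exact h2
  · -- nonexpansiveness
    intro n x hx y hy
    obtain ⟨hex, huC⟩ := hfix n x hx
    obtain ⟨hey, hvC⟩ := hfix n y hy
    set u := g n x
    set v := g n y
    have haC : ε n • x + (1 - ε n) • T u ∈ C := hcomb n x hx ⟨u, huC⟩
    have hbC : ε n • y + (1 - ε n) • T v ∈ C := hcomb n y hy ⟨v, hvC⟩
    have h2 : ‖u - v‖ ≤ ‖(ε n • x + (1 - ε n) • T u) - (ε n • y + (1 - ε n) • T v)‖ := by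
      conv_lhs => rw [hex, hey]
      exact hRne _ haC _ hbC
    have h3 : (ε n • x + (1 - ε n) • T u) - (ε n • y + (1 - ε n) • T v)
        = ε n • (x - y) + (1 - ε n) • (T u - T v) := by
      rw [smul_sub, smul_sub]; abel
    have h4 : ‖(ε n • x + (1 - ε n) • T u) - (ε n • y + (1 - ε n) • T v)‖
        ≤ ε n * ‖x - y‖ + (1 - ε n) * ‖T u - T v‖ := by
      rw [h3]
      refine le_trans (norm_add_le _ _) ?_
      rw [norm_smul, norm_smul, Real.norm_of_nonneg (le_of_lt (hεpos n)),
        Real.norm_of_nonneg (by linarith [hεle n])]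
    have h5 : ‖T u - T v‖ ≤ ‖u - v‖ := hTne _ huC _ hvC
    have h7 : ε n * ‖u - v‖ ≤ ε n * ‖x - y‖ := by nlinarith [hεpos n, hεle n]
    exact (mul_le_mul_iff_of_pos_left (hεpos n)).mp h7
  · -- identity on fixed points
    intro n x hxF hTx
    have hxC : x ∈ C := hFC hxF
    have hfp : Function.IsFixedPt (Φ n x hxC) ⟨x, hxC⟩ := by
      rw [Function.IsFixedPt]
      apply Subtype.ext
      show R (ε n • x + (1 - ε n) • T x) = x
      rw [hTx, Convex.combo_self (by ring : ε n + (1 - ε n) = 1) x]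
      exact hRid x hxF
    have := (hcontr n x hxC).fixedPoint_unique hfp
    have h2 : g n x = ((ContractingWith.fixedPoint (Φ n x hxC) (hcontr n x hxC) : C) : E) := by
      rw [hg]; simp only [dif_pos hxC]
    rw [h2, ← this]
  · -- approximate fixed point
    intro n x hx
    obtain ⟨hex, huC⟩ := hfix n x hx
    set u := g n x
    have huF : u ∈ F := hgF n x hx
    have hTuF : T u ∈ F := hTF _ huF
    have hTuC : T u ∈ C := hFC hTuF
    have haC : ε n • x + (1 - ε n) • T u ∈ C := hcomb n x hx ⟨u, huC⟩
    have h1 : ‖u - T u‖ ≤ ‖(ε n • x + (1 - ε n) • T u) - T u‖ := by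
      have e1 : u - T u = R (ε n • x + (1 - ε n) • T u) - R (T u) := by
        rw [hRid _ hTuF, ← hex]
      rw [e1]
      exact hRne _ haC _ hTuC
    have h2 : (ε n • x + (1 - ε n) • T u) - T u = ε n • (x - T u) := by
      rw [smul_sub, sub_smul, one_smul]; abel
    have h3 : ‖(ε n • x + (1 - ε n) • T u) - T u‖ = ε n * ‖x - T u‖ := by
      rw [h2, norm_smul, Real.norm_of_nonneg (le_of_lt (hεpos n))]
    refine le_trans h1 ?_
    rw [h3]
    exact mul_le_mul_of_nonneg_left (hd x hx _ hTuC) (le_of_lt (hεpos n))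

/-- Let `C` be a nonempty `τ`-compact convex bounded subset of a Banach space whose norm
is `τ`-lower semicontinuous, and let `S` be a finite commuting family of nonexpansive
`τ`-continuous self-maps of `C`.  Then `Fix S` is a nonempty nonexpansive retract of `C`. -/
theorem fix_finite_commuting_nonexpansive_retract
    {E : Type*} [NormedAddCommGroup E] [NormedSpace ℝ E] [CompleteSpace E]
    (t : TopologicalSpace E) (ht2 : @T2Space E t)
    (htgrp : @IsTopologicalAddGroup E t _)
    (hlsc : @LowerSemicontinuous E ℝ t _ (fun x => ‖x‖))
    (C : Set E) (hne : C.Nonempty) (hC : @IsCompact E t C)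
    (hconv : Convex ℝ C) (hbdd : Bornology.IsBounded C)
    (S : Set (E → E)) (hSfin : S.Finite)
    (hmaps : ∀ T ∈ S, Set.MapsTo T C C)
    (hcont : ∀ T ∈ S, @ContinuousOn E E t t T C)
    (hnonexp : ∀ T ∈ S, ∀ x ∈ C, ∀ y ∈ C, ‖T x - T y‖ ≤ ‖x - y‖)
    (hcomm : ∀ T ∈ S, ∀ U ∈ S, ∀ x ∈ C, T (U x) = U (T x)) :
    IsNonexpansiveRetract {x ∈ C | ∀ T ∈ S, T x = x} C := by
  letI : TopologicalSpace E := UniformSpace.toTopologicalSpace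
  have hN0 : ∀ z : E, ‖z‖ ≤ 0 → z = 0 := fun z h => norm_le_zero_iff.mp h
  -- `C` is closed in the norm topology
  have hCcl : IsClosed C := by
    have hseq : IsSeqClosed C := by
      intro u p hu hup
      exact @seq_mem_of_compact' E t ht2 _ htgrp _ hlsc hN0 C hC u p hu
        ((tendsto_iff_norm_sub_tendsto_zero).mp hup)
    exact hseq.isClosed
  -- induction over the finite family
  refine Set.Finite.induction_on
    (motive := fun S _ => (∀ T ∈ S, Set.MapsTo T C C) →
      (∀ T ∈ S, @ContinuousOn E E t t T C) →
      (∀ T ∈ S, ∀ x ∈ C, ∀ y ∈ C, ‖T x - T y‖ ≤ ‖x - y‖) →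
      (∀ T ∈ S, ∀ U ∈ S, ∀ x ∈ C, T (U x) = U (T x)) →
      IsNonexpansiveRetract {x ∈ C | ∀ T ∈ S, T x = x} C)
    S hSfin ?_ ?_ hmaps hcont hnonexp hcomm
  · -- base case
    intro _ _ _ _
    have h0 : {x ∈ C | ∀ T ∈ (∅ : Set (E → E)), T x = x} = C := by
      ext x; simp
    rw [h0]
    exact ⟨hne, subset_rfl, id, Set.image_id C, fun x _ => rfl, fun x _ y _ => le_refl _⟩
  · -- inductive step
    intro a S' haS hS'fin IH h1 h2 h3 h4
    have m' : ∀ T ∈ S', Set.MapsTo T C C := fun T hT => h1 T (Set.mem_insert_of_mem a hT)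
    have c' : ∀ T ∈ S', @ContinuousOn E E t t T C :=
      fun T hT => h2 T (Set.mem_insert_of_mem a hT)
    have n' : ∀ T ∈ S', ∀ x ∈ C, ∀ y ∈ C, ‖T x - T y‖ ≤ ‖x - y‖ :=
      fun T hT => h3 T (Set.mem_insert_of_mem a hT)
    have comm' : ∀ T ∈ S', ∀ U ∈ S', ∀ x ∈ C, T (U x) = U (T x) :=
      fun T hT U hU => h4 T (Set.mem_insert_of_mem a hT) U (Set.mem_insert_of_mem a hU)
    obtain ⟨hFne, hFC, R, hRC, hRid, hRne⟩ := IH m' c' n' comm'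
    set F := {x ∈ C | ∀ T ∈ S', T x = x} with hF
    have hRF : ∀ x ∈ C, R x ∈ F := by
      intro x hx
      rw [← hRC]
      exact Set.mem_image_of_mem R hx
    have hamaps : ∀ x ∈ C, a x ∈ C := fun x hx => h1 a (Set.mem_insert a S') hx
    have haF : ∀ x ∈ F, a x ∈ F := by
      intro x hx
      refine ⟨hamaps x hx.1, fun U hU => ?_⟩
      have e1 : U (a x) = a (U x) :=
        h4 U (Set.mem_insert_of_mem a hU) a (Set.mem_insert a S') x hx.1
      rw [e1, hx.2 U hU]
    obtain ⟨g, c, hc, hgF, hgne, hgid, happ⟩ :=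
      exists_approx_seq C hne hCcl hconv hbdd F hFC R hRF hRid hRne a hamaps haF
        (h3 a (Set.mem_insert a S'))
    have hFcl : @IsClosed E t F := @fixset_closed' E t ht2 _ htgrp C hC S' c'
    set G := {x ∈ C | ∀ T ∈ insert a S', T x = x} with hG
    have hGC : G ⊆ C := fun x hx => hx.1
    have hgidG : ∀ n, ∀ x ∈ G, g n x = x := by
      intro n x hx
      exact hgid n x ⟨hx.1, fun U hU => hx.2 U (Set.mem_insert_of_mem a hU)⟩
        (hx.2 a (Set.mem_insert a S'))
    obtain ⟨s, hsFix, hsid, hsne⟩ :=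
      @exists_limit_map' E t ht2 _ htgrp _ hlsc hN0 C F G hC hFcl hFC hGC a
        (h2 a (Set.mem_insert a S')) g hgF hgne hgidG c hc happ
    have hsG : ∀ x ∈ C, s x ∈ G := by
      intro x hx
      obtain ⟨hsF, hsa⟩ := hsFix x hx
      refine ⟨hsF.1, fun U hU => ?_⟩
      rcases Set.mem_insert_iff.mp hU with hU | hU
      · rw [hU]; exact hsa
      · exact hsF.2 U hU
    obtain ⟨x₀, hx₀⟩ := hne
    refine ⟨⟨s x₀, hsG x₀ hx₀⟩, hGC, s, ?_, hsid, hsne⟩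
    apply Set.Subset.antisymm
    · rintro _ ⟨x, hx, rfl⟩
      exact hsG x hx
    · intro y hy
      exact ⟨y, hy.1, hsid y hy⟩
end
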